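/- arXiv:2205.03131 — 5 statements merged into one kernel-verified Lean document; each statement's English description precedes it below -/
import Mathlib

section
/- (Expected Bernstein inequality.) Let U be a real random variable with U ≥ −b almost surely for some b > 0, with E[U] and E[U²] finite, and let κ(x) := (eˣ − x − 1)/x². Then for every η > 0 and every c_η ≥ κ(η b): log E[exp(η(E[U] − U))] ≤ η² c_η E[U²]. -/
open MeasureTheory

/-!
Since `eˣ - x - 1 = x² ∫₀¹ (1 - u) e^{ux} du`, the ratio `κ(x) = (eˣ - x - 1)/x²` is nondecreasing,
so `U ≥ -b` gives the pointwise bound `e^{-ηU} ≤ 1 - ηU + κ(ηb) η² U²`. Taking expectations and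
using `log y ≤ y - 1` bounds `log E[e^{-ηU}]` by `-ηE[U] + κ(ηb) η² E[U²]`, and the factor `e^{ηE[U]}`
cancels the linear term.
-/

lemma exp_sub_sub_one_eq_sq_mul_integral (y : ℝ) :
    Real.exp y - y - 1 = y ^ 2 * ∫ u in (0:ℝ)..1, (1 - u) * Real.exp (u * y) := by
  rcases eq_or_ne y 0 with rfl | hy
  · simp
  have hderiv : ∀ u ∈ Set.uIcc (0:ℝ) 1,
      HasDerivAt (fun u => (1 - u) * Real.exp (u * y) / y + Real.exp (u * y) / y ^ 2)
        ((1 - u) * Real.exp (u * y)) u := by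
    intro u _
    have hexp : HasDerivAt (fun u : ℝ => Real.exp (u * y)) (Real.exp (u * y) * y) u :=
      ((hasDerivAt_id u).mul_const y).exp.congr_deriv (by simp)
    refine (((((hasDerivAt_id' u).const_sub (1:ℝ)).mul hexp).div_const y).add
      (hexp.div_const _)).congr_deriv ?_
    field_simp
    ring
  rw [intervalIntegral.integral_eq_sub_of_hasDerivAt hderiv
    (Continuous.intervalIntegrable (by fun_prop) _ _)]
  field_simp
  simp only [sub_self, mul_zero, zero_add, mul_one, Real.exp_zero, sub_zero, one_mul]
  ring

lemma monotone_integral_one_sub_mul_exp :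
    Monotone fun y : ℝ => ∫ u in (0:ℝ)..1, (1 - u) * Real.exp (u * y) := by
  intro x y hxy
  refine intervalIntegral.integral_mono_on zero_le_one
    (Continuous.intervalIntegrable (by fun_prop) _ _)
    (Continuous.intervalIntegrable (by fun_prop) _ _) fun u ⟨hu0, hu1⟩ => ?_
  gcongr

lemma exp_sub_sub_one_le_mul_sq {c x : ℝ} (hc : c ≠ 0) (hx : x ≤ c) :
    Real.exp x - x - 1 ≤ (Real.exp c - c - 1) / c ^ 2 * x ^ 2 := by
  rw [exp_sub_sub_one_eq_sq_mul_integral x, exp_sub_sub_one_eq_sq_mul_integral c,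
    mul_div_cancel_left₀ _ (pow_ne_zero 2 hc), mul_comm]
  gcongr
  exact monotone_integral_one_sub_mul_exp hx

section

variable {Ω : Type*} [MeasurableSpace Ω] {μ : Measure Ω} {X : Ω → ℝ} {c : ℝ}

lemma ae_exp_le_of_ae_le (hc : c ≠ 0) (hX : ∀ᵐ ω ∂μ, X ω ≤ c) :
    ∀ᵐ ω ∂μ, Real.exp (X ω) ≤ 1 + X ω + (Real.exp c - c - 1) / c ^ 2 * X ω ^ 2 := by
  filter_upwards [hX] with ω hω
  linarith [exp_sub_sub_one_le_mul_sq hc hω]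

lemma integrable_exp_of_ae_le [IsFiniteMeasure μ] (hc : c ≠ 0) (hX : ∀ᵐ ω ∂μ, X ω ≤ c)
    (hXint : Integrable X μ) (hX2int : Integrable (fun ω => X ω ^ 2) μ) :
    Integrable (fun ω => Real.exp (X ω)) μ := by
  refine (((integrable_const 1).add hXint).add
    (hX2int.const_mul ((Real.exp c - c - 1) / c ^ 2))).mono'
    (Real.continuous_exp.comp_aestronglyMeasurable hXint.1) ?_
  filter_upwards [ae_exp_le_of_ae_le hc hX] with ω hω
  rwa [Real.norm_of_nonneg (Real.exp_pos _).le]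

lemma integral_exp_le_of_ae_le [IsProbabilityMeasure μ] (hc : c ≠ 0) (hX : ∀ᵐ ω ∂μ, X ω ≤ c)
    (hXint : Integrable X μ) (hX2int : Integrable (fun ω => X ω ^ 2) μ) :
    ∫ ω, Real.exp (X ω) ∂μ
      ≤ 1 + ∫ ω, X ω ∂μ + (Real.exp c - c - 1) / c ^ 2 * ∫ ω, X ω ^ 2 ∂μ := by
  have hlin : Integrable (fun ω => 1 + X ω) μ := (integrable_const 1).add hXint
  calc ∫ ω, Real.exp (X ω) ∂μ
      ≤ ∫ ω, (1 + X ω + (Real.exp c - c - 1) / c ^ 2 * X ω ^ 2) ∂μ :=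
        integral_mono_ae (integrable_exp_of_ae_le hc hX hXint hX2int)
          (hlin.add (hX2int.const_mul _)) (ae_exp_le_of_ae_le hc hX)
    _ = 1 + ∫ ω, X ω ∂μ + (Real.exp c - c - 1) / c ^ 2 * ∫ ω, X ω ^ 2 ∂μ := by
        rw [integral_add hlin (hX2int.const_mul _), integral_add (integrable_const 1) hXint,
          integral_const_mul]
        simp

lemma log_integral_exp_le_of_ae_le [IsProbabilityMeasure μ] (hc : c ≠ 0)
    (hX : ∀ᵐ ω ∂μ, X ω ≤ c) (hXint : Integrable X μ) (hX2int : Integrable (fun ω => X ω ^ 2) μ) :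
    Real.log (∫ ω, Real.exp (X ω) ∂μ)
      ≤ ∫ ω, X ω ∂μ + (Real.exp c - c - 1) / c ^ 2 * ∫ ω, X ω ^ 2 ∂μ := by
  have hpos := integral_exp_pos (integrable_exp_of_ae_le hc hX hXint hX2int)
  linarith [Real.log_le_sub_one_of_pos hpos, integral_exp_le_of_ae_le hc hX hXint hX2int]

end

theorem expected_bernstein_inequality_general
    {Ω : Type*} [MeasurableSpace Ω] (P : Measure Ω) [IsProbabilityMeasure P]
    (U : Ω → ℝ)
    (b : ℝ) (hb : 0 < b) (hlb : ∀ᵐ ω ∂P, -b ≤ U ω)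
    (hUInt : Integrable U P) (hU2Int : Integrable (fun ω => (U ω) ^ 2) P)
    (κ : ℝ → ℝ) (hκ : ∀ x, κ x = (Real.exp x - x - 1) / x ^ 2) :
    ∀ η : ℝ, 0 < η → ∀ cη : ℝ, κ (η * b) ≤ cη →
      Real.log (∫ ω, Real.exp (η * ((∫ ω', U ω' ∂P) - U ω)) ∂P)
        ≤ η ^ 2 * cη * ∫ ω, (U ω) ^ 2 ∂P := by
  intro η hη cη hcη
  have hX : ∀ᵐ ω ∂P, -(η * U ω) ≤ η * b := by
    filter_upwards [hlb] with ω hω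
    nlinarith
  have hX2int : Integrable (fun ω => (-(η * U ω)) ^ 2) P :=
    (hU2Int.const_mul (η ^ 2)).congr (ae_of_all _ fun ω => by ring)
  have hlog := log_integral_exp_le_of_ae_le (mul_pos hη hb).ne' hX (hUInt.const_mul η).neg hX2int
  have hshift : ∫ ω, Real.exp (η * ((∫ ω', U ω' ∂P) - U ω)) ∂P
      = Real.exp (η * ∫ ω', U ω' ∂P) * ∫ ω, Real.exp (-(η * U ω)) ∂P := by
    rw [← integral_const_mul]
    simp_rw [← Real.exp_add, mul_sub, sub_eq_add_neg]
  simp_rw [← hκ, neg_sq, mul_pow, integral_neg, integral_const_mul] at hlog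
  rw [hshift, Real.log_mul (Real.exp_ne_zero _)
    (integral_exp_pos (integrable_exp_of_ae_le (mul_pos hη hb).ne' hX
      (hUInt.const_mul η).neg hX2int)).ne', Real.log_exp]
  have hU2 : 0 ≤ η ^ 2 * ∫ ω, U ω ^ 2 ∂P :=
    mul_nonneg (sq_nonneg η) (integral_nonneg fun ω => sq_nonneg _)
  nlinarith [mul_le_mul_of_nonneg_right hcη hU2]

/-- **Expected Bernstein inequality.** If `U ≥ -b` almost surely, then for every `η > 0` and
every `c_η ≥ κ(ηb)` with `κ(x) = (eˣ - x - 1)/x²`, one has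
`log E[exp(η(E[U] - U))] ≤ η² c_η E[U²]`. -/
theorem expected_bernstein_inequality
    {Ω : Type*} [MeasurableSpace Ω] (P : Measure Ω) [IsProbabilityMeasure P]
    (U : Ω → ℝ) (hU : Measurable U)
    (b : ℝ) (hb : 0 < b) (hlb : ∀ᵐ ω ∂P, -b ≤ U ω)
    (hUInt : Integrable U P) (hU2Int : Integrable (fun ω => (U ω) ^ 2) P)
    (κ : ℝ → ℝ) (hκ : ∀ x, κ x = (Real.exp x - x - 1) / x ^ 2) :
    ∀ η : ℝ, 0 < η → ∀ cη : ℝ, κ (η * b) ≤ cη →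
      Real.log (∫ ω, Real.exp (η * ((∫ ω', U ω' ∂P) - U ω)) ∂P)
        ≤ η ^ 2 * cη * ∫ ω, (U ω) ^ 2 ∂P :=
  expected_bernstein_inequality_general P U b hb hlb hUInt hU2Int κ hκ
end

section
/- Assume the expected η-central condition holds for some η > 0, i.e. E_{P_W ⊗ μ}[exp(−η r(W', Z'))] ≤ 1, and that the (u, c)-witness condition holds for some u > 0 and c ∈ (0, 1], i.e. E_{P_W ⊗ μ}[r(W', Z') · 1{r(W', Z') ≤ u}] ≥ c · E_{P_W ⊗ μ}[r(W', Z')]. Let 0 < η' < η and set c_u := (1/c) · (η'u + 1)/(1 − η'/η). Then E_{P_W ⊗ μ}[r(W', Z')] ≤ −(c_u/η') · log E_{P_W ⊗ μ}[exp(−η' r(W', Z'))]. -/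
/-!
For `0 < p < q` (here `p = η'`, `q = η`), `x · 1{x ≤ u}` is dominated pointwise by
`A (1 - e^{-p x}) + B (e^{-q x} - 1)` with `A = q (p u + 1) / (p (q - p))` and
`B = p (q u + 1) / (q (q - p)) ≥ 0`. Taking expectations, the central condition makes the
`B`-term nonpositive and `1 - y ≤ -log y` bounds the `A`-term by `-A log E[e^{-p r}]`; with the
witness condition this gives `c E[r] ≤ -A log E[e^{-p r}]`, and `A / c = c_u / p`.

The dominating function is affine and, by convexity of `exp`, nondecreasing in `u`. So it
suffices to bound it below by `x` at `u = 0` for `x ≤ 0` and at `u = x` for `x ≥ 0`, and by `0`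
at `u = 0` for `x ≥ 0`. The two bounds by `x` reduce to the monotonicity of
`t ↦ ∫₀¹ w(σ) e^{-tσ} dσ` for the weights `w(σ) = 1 - σ` and `w(σ) = σ`, whose values are
`(e^{-t} - 1 + t) / t²` and `(1 - (1 + t) e^{-t}) / t²`.
-/

open MeasureTheory Real Set

lemma antitone_integral_mul_exp_neg_mul {w : ℝ → ℝ} (hw : Continuous w)
    (hw_nonneg : ∀ σ ∈ Icc (0 : ℝ) 1, 0 ≤ w σ) :
    Antitone fun t => ∫ σ in (0 : ℝ)..1, w σ * exp (-(t * σ)) := by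
  intro s t hst
  refine intervalIntegral.integral_mono_on zero_le_one (Continuous.intervalIntegrable
    (by fun_prop) 0 1) (Continuous.intervalIntegrable (by fun_prop) 0 1) fun σ hσ => ?_
  exact mul_le_mul_of_nonneg_left
    (exp_le_exp.2 (neg_le_neg (mul_le_mul_of_nonneg_right hst hσ.1))) (hw_nonneg σ hσ)

lemma hasDerivAt_exp_neg_mul (t σ : ℝ) :
    HasDerivAt (fun σ => exp (-(t * σ))) (exp (-(t * σ)) * -t) σ := by
  simpa using ((hasDerivAt_id σ).const_mul t).neg.exp

lemma sq_mul_integral_mul_exp_neg_mul (t : ℝ) :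
    t ^ 2 * ∫ σ in (0 : ℝ)..1, σ * exp (-(t * σ)) = 1 - (1 + t) * exp (-t) := by
  rcases eq_or_ne t 0 with rfl | ht
  · simp
  have hderiv : ∀ σ ∈ uIcc (0 : ℝ) 1, HasDerivAt
      (fun σ => -(t * σ + 1) * exp (-(t * σ)) / t ^ 2) (σ * exp (-(t * σ))) σ := by
    intro σ _
    have hlin : HasDerivAt (fun σ => t * σ + 1) t σ := by
      simpa using ((hasDerivAt_id σ).const_mul t).add_const 1
    refine ((hlin.neg.mul (hasDerivAt_exp_neg_mul t σ)).div_const (t ^ 2)).congr_deriv ?_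
    simp only [Pi.neg_apply]
    field_simp
    ring
  rw [intervalIntegral.integral_eq_sub_of_hasDerivAt hderiv
    (Continuous.intervalIntegrable (by fun_prop) 0 1)]
  field_simp
  simp only [mul_one, mul_zero, neg_zero, exp_zero]
  ring

lemma sq_mul_integral_one_sub_mul_exp_neg_mul (t : ℝ) :
    t ^ 2 * ∫ σ in (0 : ℝ)..1, (1 - σ) * exp (-(t * σ)) = exp (-t) - 1 + t := by
  rcases eq_or_ne t 0 with rfl | ht
  · simp
  have hderiv : ∀ σ ∈ uIcc (0 : ℝ) 1, HasDerivAt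
      (fun σ => (t * σ - t + 1) * exp (-(t * σ)) / t ^ 2) ((1 - σ) * exp (-(t * σ))) σ := by
    intro σ _
    have hlin : HasDerivAt (fun σ => t * σ - t + 1) t σ := by
      simpa using (((hasDerivAt_id σ).const_mul t).sub_const t).add_const 1
    refine ((hlin.mul (hasDerivAt_exp_neg_mul t σ)).div_const (t ^ 2)).congr_deriv ?_
    field_simp
    ring
  rw [intervalIntegral.integral_eq_sub_of_hasDerivAt hderiv
    (Continuous.intervalIntegrable (by fun_prop) 0 1)]
  field_simp
  simp only [mul_one, mul_zero, neg_zero, exp_zero]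
  ring

lemma mul_one_sub_exp_neg_mul_le {p q : ℝ} (hp : 0 ≤ p) (hpq : p ≤ q) (x : ℝ) :
    p * (1 - exp (-q * x)) ≤ q * (1 - exp (-p * x)) := by
  rcases hp.eq_or_lt with rfl | hp
  · simp
  have hq : 0 < q := hp.trans_le hpq
  have hconv := convexOn_exp.2 (mem_univ (-q * x)) (mem_univ 0) (div_pos hp hq).le
    (sub_nonneg.2 ((div_le_one hq).2 hpq)) (add_sub_cancel _ _)
  have hpx : p / q * (-q * x) = -p * x := by field_simp
  simp only [smul_eq_mul, mul_zero, add_zero, exp_zero, mul_one, hpx] at hconv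
  have hmul : q * exp (-p * x) ≤ p * exp (-q * x) + (q - p) :=
    calc _ ≤ q * (p / q * exp (-q * x) + (1 - p / q)) := mul_le_mul_of_nonneg_left hconv hq.le
      _ = _ := by field_simp
  linarith

noncomputable def witnessMajorant (p q u x : ℝ) : ℝ :=
  q * (p * u + 1) / (p * (q - p)) * (1 - exp (-p * x))
    + p * (q * u + 1) / (q * (q - p)) * (exp (-q * x) - 1)

section WitnessMajorant

variable {p q : ℝ}

lemma witnessMajorant_mono (hp : 0 < p) (hpq : p < q) (x : ℝ) :
    Monotone fun u => witnessMajorant p q u x := by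
  intro u v huv
  have hq : 0 < q := hp.trans hpq
  have hqp := sub_pos.2 hpq
  have hdiff : witnessMajorant p q v x - witnessMajorant p q u x
      = (v - u) * (q * (1 - exp (-p * x)) - p * (1 - exp (-q * x))) / (q - p) := by
    unfold witnessMajorant
    field_simp [hqp.ne']
    ring
  have hslope := mul_one_sub_exp_neg_mul_le hp.le hpq.le x
  have : 0 ≤ (v - u) * (q * (1 - exp (-p * x)) - p * (1 - exp (-q * x))) / (q - p) :=
    div_nonneg (mul_nonneg (sub_nonneg.2 huv) (sub_nonneg.2 hslope)) hqp.le
  simp only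
  linarith

lemma witnessMajorant_zero_nonneg (hp : 0 < p) (hpq : p < q) {x : ℝ} (hx : 0 ≤ x) :
    0 ≤ witnessMajorant p q 0 x := by
  have hq : 0 < q := hp.trans hpq
  have hqp := sub_pos.2 hpq
  have hform : witnessMajorant p q 0 x
      = (q ^ 2 * (1 - exp (-p * x)) - p ^ 2 * (1 - exp (-q * x))) / (p * q * (q - p)) := by
    unfold witnessMajorant
    field_simp [hqp.ne']
    ring
  have hslope := mul_one_sub_exp_neg_mul_le hp.le hpq.le x
  have hexp : exp (-q * x) ≤ 1 := exp_le_one_iff.2 (by nlinarith)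
  rw [hform]
  refine div_nonneg ?_ (by positivity)
  nlinarith [mul_le_mul_of_nonneg_left hslope hq.le,
    mul_nonneg hp.le (mul_nonneg hqp.le (sub_nonneg.2 hexp))]

lemma self_le_witnessMajorant_zero (hp : 0 < p) (hpq : p < q) {x : ℝ} (hx : x ≤ 0) :
    x ≤ witnessMajorant p q 0 x := by
  set S := fun t : ℝ => ∫ σ in (0 : ℝ)..1, (1 - σ) * exp (-(t * σ))
  have hq : 0 < q := hp.trans hpq
  have hqp := sub_pos.2 hpq
  have hform : p * q * (q - p) * (witnessMajorant p q 0 x - x)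
      = p ^ 2 * (exp (-(q * x)) - 1 + q * x) - q ^ 2 * (exp (-(p * x)) - 1 + p * x) := by
    unfold witnessMajorant
    rw [neg_mul, neg_mul]
    field_simp [hqp.ne']
    ring
  rw [← sq_mul_integral_one_sub_mul_exp_neg_mul, ← sq_mul_integral_one_sub_mul_exp_neg_mul]
    at hform
  have hS : S (p * x) ≤ S (q * x) :=
    antitone_integral_mul_exp_neg_mul (by fun_prop) (fun σ hσ => sub_nonneg.2 hσ.2)
      (by nlinarith)
  have : 0 ≤ p * q * (q - p) * (witnessMajorant p q 0 x - x) := by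
    rw [hform]
    calc (0 : ℝ) ≤ (p * q * x) ^ 2 * (S (q * x) - S (p * x)) :=
          mul_nonneg (sq_nonneg _) (sub_nonneg.2 hS)
      _ = _ := by ring
  have := (mul_nonneg_iff_of_pos_left (by positivity)).1 this
  linarith

lemma self_le_witnessMajorant_self (hp : 0 < p) (hpq : p < q) {v : ℝ} (hv : 0 ≤ v) :
    v ≤ witnessMajorant p q v v := by
  set V := fun t : ℝ => ∫ σ in (0 : ℝ)..1, σ * exp (-(t * σ))
  have hq : 0 < q := hp.trans hpq
  have hqp := sub_pos.2 hpq
  have hform : p * q * (q - p) * (witnessMajorant p q v v - v)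
      = q ^ 2 * (1 - (1 + p * v) * exp (-(p * v)))
        - p ^ 2 * (1 - (1 + q * v) * exp (-(q * v))) := by
    unfold witnessMajorant
    rw [neg_mul, neg_mul]
    field_simp [hqp.ne']
    ring
  rw [← sq_mul_integral_mul_exp_neg_mul, ← sq_mul_integral_mul_exp_neg_mul] at hform
  have hV : V (q * v) ≤ V (p * v) :=
    antitone_integral_mul_exp_neg_mul (by fun_prop) (fun σ hσ => hσ.1) (by nlinarith)
  have : 0 ≤ p * q * (q - p) * (witnessMajorant p q v v - v) := by
    rw [hform]
    calc (0 : ℝ) ≤ (p * q * v) ^ 2 * (V (p * v) - V (q * v)) :=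
          mul_nonneg (sq_nonneg _) (sub_nonneg.2 hV)
      _ = _ := by ring
  have := (mul_nonneg_iff_of_pos_left (by positivity)).1 this
  linarith

lemma ite_le_witnessMajorant (hp : 0 < p) (hpq : p < q) {u : ℝ} (hu : 0 ≤ u) (x : ℝ) :
    (if x ≤ u then x else 0) ≤ witnessMajorant p q u x := by
  split_ifs with hxu
  · rcases le_total x 0 with hx | hx
    · exact (self_le_witnessMajorant_zero hp hpq hx).trans (witnessMajorant_mono hp hpq x hu)
    · exact (self_le_witnessMajorant_self hp hpq hx).trans (witnessMajorant_mono hp hpq x hxu)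
  · exact (witnessMajorant_zero_nonneg hp hpq (hu.trans (not_le.1 hxu).le)).trans
      (witnessMajorant_mono hp hpq x hu)

end WitnessMajorant

section Expectation

variable {Ω : Type*} [MeasurableSpace Ω] {ν : Measure Ω} [IsProbabilityMeasure ν] {X : Ω → ℝ}
  {p q u : ℝ}

lemma integral_witnessMajorant (hp_int : Integrable (fun ω => exp (-p * X ω)) ν)
    (hq_int : Integrable (fun ω => exp (-q * X ω)) ν) :
    Integrable (fun ω => witnessMajorant p q u (X ω)) ν ∧
      ∫ ω, witnessMajorant p q u (X ω) ∂ν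
        = q * (p * u + 1) / (p * (q - p)) * (1 - ∫ ω, exp (-p * X ω) ∂ν)
          + p * (q * u + 1) / (q * (q - p)) * ((∫ ω, exp (-q * X ω) ∂ν) - 1) := by
  have hp_int' :
      Integrable (fun ω => q * (p * u + 1) / (p * (q - p)) * (1 - exp (-p * X ω))) ν :=
    ((integrable_const 1).sub hp_int).const_mul _
  have hq_int' :
      Integrable (fun ω => p * (q * u + 1) / (q * (q - p)) * (exp (-q * X ω) - 1)) ν :=
    (hq_int.sub (integrable_const 1)).const_mul _
  refine ⟨hp_int'.add hq_int', ?_⟩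
  simp only [witnessMajorant]
  rw [integral_add hp_int' hq_int', integral_const_mul, integral_const_mul,
    integral_sub (integrable_const 1) hp_int, integral_sub hq_int (integrable_const 1)]
  simp

lemma integral_ite_le_neg_mul_log_integral_exp (hp : 0 < p) (hpq : p < q) (hu : 0 ≤ u)
    (hp_int : Integrable (fun ω => exp (-p * X ω)) ν)
    (hq_int : Integrable (fun ω => exp (-q * X ω)) ν)
    (hwit_int : Integrable (fun ω => if X ω ≤ u then X ω else 0) ν)
    (hcentral : ∫ ω, exp (-q * X ω) ∂ν ≤ 1) :
    ∫ ω, (if X ω ≤ u then X ω else 0) ∂ν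
      ≤ q * (p * u + 1) / (p * (q - p)) * -log (∫ ω, exp (-p * X ω) ∂ν) := by
  obtain ⟨hmaj_int, hmaj⟩ := integral_witnessMajorant (u := u) hp_int hq_int
  have hq : 0 < q := hp.trans hpq
  have hlog := log_le_sub_one_of_pos (integral_exp_pos hp_int)
  calc ∫ ω, (if X ω ≤ u then X ω else 0) ∂ν ≤ ∫ ω, witnessMajorant p q u (X ω) ∂ν :=
        integral_mono hwit_int hmaj_int fun ω => ite_le_witnessMajorant hp hpq hu (X ω)
    _ ≤ q * (p * u + 1) / (p * (q - p)) * (1 - ∫ ω, exp (-p * X ω) ∂ν) := by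
        rw [hmaj]
        have : 0 ≤ p * (q * u + 1) / (q * (q - p)) := by positivity
        nlinarith
    _ ≤ q * (p * u + 1) / (p * (q - p)) * -log (∫ ω, exp (-p * X ω) ∂ν) :=
        mul_le_mul_of_nonneg_left (by linarith) (by positivity)

theorem integral_le_neg_mul_log_integral_exp_of_central_of_witness {c : ℝ} (hp : 0 < p)
    (hpq : p < q) (hu : 0 ≤ u) (hc : 0 < c)
    (hp_int : Integrable (fun ω => exp (-p * X ω)) ν)
    (hq_int : Integrable (fun ω => exp (-q * X ω)) ν)
    (hwit_int : Integrable (fun ω => if X ω ≤ u then X ω else 0) ν)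
    (hcentral : ∫ ω, exp (-q * X ω) ∂ν ≤ 1)
    (hwitness : c * ∫ ω, X ω ∂ν ≤ ∫ ω, (if X ω ≤ u then X ω else 0) ∂ν) :
    ∫ ω, X ω ∂ν
      ≤ -((1 / c) * (p * u + 1) / (1 - p / q) / p) * log (∫ ω, exp (-p * X ω) ∂ν) := by
  have hbound := hwitness.trans
    (integral_ite_le_neg_mul_log_integral_exp hp hpq hu hp_int hq_int hwit_int hcentral)
  have hconst : -((1 / c) * (p * u + 1) / (1 - p / q) / p) * log (∫ ω, exp (-p * X ω) ∂ν)
      = q * (p * u + 1) / (p * (q - p)) * -log (∫ ω, exp (-p * X ω) ∂ν) / c := by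
    have : q ≠ 0 := (hp.trans hpq).ne'
    have : q - p ≠ 0 := (sub_pos.2 hpq).ne'
    field_simp
  rw [hconst, le_div_iff₀ hc]
  linarith

end Expectation

theorem central_witness_excess_risk_mgf_bound_general
    {𝒲 𝒵 : Type*} [MeasurableSpace 𝒲] [MeasurableSpace 𝒵]
    (Pw : Measure 𝒲) [IsProbabilityMeasure Pw]
    (μ : Measure 𝒵) [IsProbabilityMeasure μ]
    (r : 𝒲 → 𝒵 → ℝ)
    (η u c : ℝ) (hη : 0 < η) (hu : 0 < u) (hc : 0 < c)
    -- all expectations appearing are finite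
    (hexpInt : ∀ η' : ℝ, 0 < η' → η' ≤ η →
      Integrable (fun p : 𝒲 × 𝒵 => Real.exp (-η' * r p.1 p.2)) (Pw.prod μ))
    (hwitInt : Integrable
      (fun p : 𝒲 × 𝒵 => if r p.1 p.2 ≤ u then r p.1 p.2 else 0) (Pw.prod μ))
    -- expected `η`-central condition
    (hcentral : ∫ p, Real.exp (-η * r p.1 p.2) ∂(Pw.prod μ) ≤ 1)
    -- `(u, c)`-witness condition
    (hwitness : c * ∫ p, r p.1 p.2 ∂(Pw.prod μ)
      ≤ ∫ p, (if r p.1 p.2 ≤ u then r p.1 p.2 else 0) ∂(Pw.prod μ)) :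
    ∀ η' : ℝ, 0 < η' → η' < η →
      ∫ p, r p.1 p.2 ∂(Pw.prod μ)
        ≤ -((1 / c) * (η' * u + 1) / (1 - η' / η) / η')
            * Real.log (∫ p, Real.exp (-η' * r p.1 p.2) ∂(Pw.prod μ)) :=
  fun η' hη' hη'η =>
    integral_le_neg_mul_log_integral_exp_of_central_of_witness hη' hη'η hu.le hc
    (hexpInt η' hη' hη'η.le) (hexpInt η hη le_rfl) hwitInt hcentral hwitness

/-- **Lemma 2 (generalized from Grünwald–Mehta).** Under the expected `η`-central condition and
the `(u, c)`-witness condition, the expected excess risk is bounded by `-c_u/η'` times the log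
of the moment generating function `E[exp(-η' r(W', Z'))]`, for every `0 < η' < η`. -/
theorem central_witness_excess_risk_mgf_bound
    {𝒲 𝒵 : Type*} [MeasurableSpace 𝒲] [MeasurableSpace 𝒵]
    (Pw : Measure 𝒲) [IsProbabilityMeasure Pw]
    (μ : Measure 𝒵) [IsProbabilityMeasure μ]
    (ℓ : 𝒲 → 𝒵 → ℝ) (hℓ : Measurable (Function.uncurry ℓ))
    (wstar : 𝒲) (hwstar : ∀ w, ∫ z, ℓ wstar z ∂μ ≤ ∫ z, ℓ w z ∂μ)
    (r : 𝒲 → 𝒵 → ℝ) (hr : r = fun w z => ℓ w z - ℓ wstar z)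
    (η u c : ℝ) (hη : 0 < η) (hu : 0 < u) (hc : 0 < c) (hc1 : c ≤ 1)
    -- all expectations appearing are finite
    (hrInt : Integrable (fun p : 𝒲 × 𝒵 => r p.1 p.2) (Pw.prod μ))
    (hexpInt : ∀ η' : ℝ, 0 < η' → η' ≤ η →
      Integrable (fun p : 𝒲 × 𝒵 => Real.exp (-η' * r p.1 p.2)) (Pw.prod μ))
    (hwitInt : Integrable
      (fun p : 𝒲 × 𝒵 => if r p.1 p.2 ≤ u then r p.1 p.2 else 0) (Pw.prod μ))
    -- expected `η`-central condition
    (hcentral : ∫ p, Real.exp (-η * r p.1 p.2) ∂(Pw.prod μ) ≤ 1)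
    -- `(u, c)`-witness condition
    (hwitness : c * ∫ p, r p.1 p.2 ∂(Pw.prod μ)
      ≤ ∫ p, (if r p.1 p.2 ≤ u then r p.1 p.2 else 0) ∂(Pw.prod μ)) :
    ∀ η' : ℝ, 0 < η' → η' < η →
      ∫ p, r p.1 p.2 ∂(Pw.prod μ)
        ≤ -((1 / c) * (η' * u + 1) / (1 - η' / η) / η')
            * Real.log (∫ p, Real.exp (-η' * r p.1 p.2) ∂(Pw.prod μ)) :=
  central_witness_excess_risk_mgf_bound_general Pw μ r η u c hη hu hc hexpInt hwitInt hcentral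
    hwitness
end

section
/- Suppose the excess loss r(W', Z') is σ-sub-Gaussian under the product law P_W ⊗ μ, and let ρ := E_{P_W ⊗ μ}[r(W', Z')] > 0. Then for every η with 0 < η < 2ρ/σ², the learning tuple satisfies the (η, a_η)-central condition with a_η := 1 − ησ²/(2ρ), i.e. log E_{P_W ⊗ μ}[exp(−η r(W', Z'))] ≤ −a_η η ρ. -/
/-!
Write `r = (r - ρ) + ρ`. Shifting a random variable by a constant `ρ` shifts its cumulant
generating function at `t` by `t ρ`, so at `t = -η` the sub-Gaussian bound on the centred excess
loss gives `log E[exp(-η r)] ≤ σ²η²/2 - ηρ = -(1 - ησ²/(2ρ)) η ρ`.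
-/

open MeasureTheory ProbabilityTheory

namespace ProbabilityTheory

variable {Ω : Type*} [MeasurableSpace Ω] {μ : Measure Ω} {X : Ω → ℝ} {t : ℝ}

theorem cgf_add_const (hμ : μ ≠ 0) (h_int : Integrable (fun ω => Real.exp (t * X ω)) μ)
    (α : ℝ) : cgf (fun ω => X ω + α) μ t = cgf X μ t + t * α := by
  rw [cgf, mgf_add_const, Real.log_mul (mgf_pos' hμ h_int).ne' (Real.exp_ne_zero _),
    Real.log_exp, cgf]

end ProbabilityTheory

theorem subGaussian_implies_eta_c_central_general
    {𝒲 𝒵 : Type*} [MeasurableSpace 𝒲] [MeasurableSpace 𝒵]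
    (Pw : Measure 𝒲) [IsProbabilityMeasure Pw]
    (μ : Measure 𝒵) [IsProbabilityMeasure μ]
    (r : 𝒲 → 𝒵 → ℝ)
    (σ : ℝ)
    (ρ : ℝ) (hρpos : 0 < ρ)
    -- the excess loss is integrable and `σ`-sub-Gaussian under `P_W ⊗ μ`
    (hMGF : ∀ η : ℝ,
      Integrable (fun p : 𝒲 × 𝒵 => Real.exp (η * (r p.1 p.2 - ρ))) (Pw.prod μ))
    (hsubG : ∀ η : ℝ,
      Real.log (∫ p, Real.exp (η * (r p.1 p.2 - ρ)) ∂(Pw.prod μ)) ≤ σ ^ 2 * η ^ 2 / 2) :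
    ∀ η : ℝ, 0 < η → η < 2 * ρ / σ ^ 2 →
      Real.log (∫ p, Real.exp (-η * r p.1 p.2) ∂(Pw.prod μ))
        ≤ -(1 - η * σ ^ 2 / (2 * ρ)) * η * ρ := by
  intro η _ _
  have h_shift := cgf_add_const (IsProbabilityMeasure.ne_zero _) (hMGF (-η)) ρ
  simp only [sub_add_cancel] at h_shift
  calc Real.log (∫ p, Real.exp (-η * r p.1 p.2) ∂(Pw.prod μ))
      = cgf (fun p : 𝒲 × 𝒵 => r p.1 p.2 - ρ) (Pw.prod μ) (-η) + -η * ρ := h_shift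
    _ ≤ σ ^ 2 * (-η) ^ 2 / 2 + -η * ρ := by gcongr; exact hsubG (-η)
    _ = -(1 - η * σ ^ 2 / (2 * ρ)) * η * ρ := by field_simp; ring

/-- **The sub-Gaussian condition implies the `(η, a_η)`-central condition.** If the excess loss
is `σ`-sub-Gaussian under `P_W ⊗ μ` with positive expected excess risk `ρ`, then for every
`0 < η < 2ρ/σ²`, `log E[exp(-η r(W', Z'))] ≤ -a_η η ρ` with `a_η = 1 - ησ²/(2ρ)`. -/
theorem subGaussian_implies_eta_c_central
    {𝒲 𝒵 : Type*} [MeasurableSpace 𝒲] [MeasurableSpace 𝒵]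
    (Pw : Measure 𝒲) [IsProbabilityMeasure Pw]
    (μ : Measure 𝒵) [IsProbabilityMeasure μ]
    (ℓ : 𝒲 → 𝒵 → ℝ) (hℓ : Measurable (Function.uncurry ℓ))
    (wstar : 𝒲) (hwstar : ∀ w, ∫ z, ℓ wstar z ∂μ ≤ ∫ z, ℓ w z ∂μ)
    (r : 𝒲 → 𝒵 → ℝ) (hr : r = fun w z => ℓ w z - ℓ wstar z)
    (σ : ℝ) (hσ : 0 < σ)
    (ρ : ℝ) (hρ : ρ = ∫ p, r p.1 p.2 ∂(Pw.prod μ)) (hρpos : 0 < ρ)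
    -- the excess loss is integrable and `σ`-sub-Gaussian under `P_W ⊗ μ`
    (hrInt : Integrable (fun p : 𝒲 × 𝒵 => r p.1 p.2) (Pw.prod μ))
    (hMGF : ∀ η : ℝ,
      Integrable (fun p : 𝒲 × 𝒵 => Real.exp (η * (r p.1 p.2 - ρ))) (Pw.prod μ))
    (hsubG : ∀ η : ℝ,
      Real.log (∫ p, Real.exp (η * (r p.1 p.2 - ρ)) ∂(Pw.prod μ)) ≤ σ ^ 2 * η ^ 2 / 2) :
    ∀ η : ℝ, 0 < η → η < 2 * ρ / σ ^ 2 →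
      Real.log (∫ p, Real.exp (-η * r p.1 p.2) ∂(Pw.prod μ))
        ≤ -(1 - η * σ ^ 2 / (2 * ρ)) * η * ρ :=
  subGaussian_implies_eta_c_central_general Pw μ r σ ρ hρpos hMGF hsubG
end

section
/- Let W' and Z be independent real Gaussian random variables with W' ∼ N(m, σ²/n) and Z ∼ N(m, σ²), and let r(w, z) = (w − z)² − (m − z)². Then for every η ∈ ℝ with 4η²σ⁴ + 2ησ² < n, E[exp(η r(W', Z))] = √( n / (n − 4η²σ⁴ − 2ησ²) ). -/
open MeasureTheory ProbabilityTheory Real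
open scoped NNReal

/-!
Since `(w - z)² - (m - z)² = (w - m)² - 2 (w - m) (z - m)`, the Gaussian moment generating
function of `Z` gives `E[exp (η r(w, Z))] = exp (c (w - m)²)` with `c = η + 2η²σ²`. Completing
the square in the Gaussian integral, `E[exp (c (W' - m)²)] = (1 - 2 c v)^(-1/2)` for
`W' ∼ N(m, v)` and `2 c v < 1`; with `v = σ²/n` this is the claimed value. Fubini applies because
the integrand is positive and both iterated integrals are finite.
-/

theorem integral_prod_of_nonneg {α β : Type*} [MeasurableSpace α] [MeasurableSpace β]
    {μ : Measure α} {ν : Measure β} [SFinite μ] [SFinite ν] {f : α × β → ℝ} (hf : 0 ≤ f)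
    (hfm : AEStronglyMeasurable f (μ.prod ν))
    (h_section : ∀ᵐ x ∂μ, Integrable (fun y ↦ f (x, y)) ν)
    (h_inner : Integrable (fun x ↦ ∫ y, f (x, y) ∂ν) μ) :
    ∫ z, f z ∂μ.prod ν = ∫ x, ∫ y, f (x, y) ∂ν ∂μ := by
  refine integral_prod f ((integrable_prod_iff hfm).2 ⟨h_section, ?_⟩)
  simpa only [Real.norm_of_nonneg (hf _)] using h_inner

theorem integral_exp_mul_sq_sub_gaussianReal (μ : ℝ) (v : ℝ≥0) {a : ℝ} (ha : 2 * a * v < 1) :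
    ∫ x, rexp (a * (x - μ) ^ 2) ∂gaussianReal μ v = (√(1 - 2 * a * v))⁻¹ := by
  rcases eq_or_ne v 0 with rfl | hv
  · simp [gaussianReal_zero_var]
  have hv_pos : (0 : ℝ) < v := by positivity
  have hd : 0 < 1 - 2 * a * v := by linarith
  set b := (1 - 2 * a * v) / (2 * v) with hb_def
  have hdensity : ∀ x, gaussianPDFReal μ v x • rexp (a * (x - μ) ^ 2)
      = (√(2 * π * v))⁻¹ * rexp (-b * (x - μ) ^ 2) := by
    intro x
    rw [gaussianPDFReal, smul_eq_mul, mul_assoc, ← exp_add, hb_def]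
    congr 2
    field_simp
    ring
  have hπb : π / b = 2 * π * v / (1 - 2 * a * v) := by
    rw [hb_def]
    field_simp
  simp_rw [integral_gaussianReal_eq_integral_smul hv, hdensity]
  rw [integral_const_mul, integral_sub_right_eq_self (fun x ↦ rexp (-b * x ^ 2)) μ,
    integral_gaussian, hπb, sqrt_div' _ hd.le]
  have : √(2 * π * v) ≠ 0 := by positivity
  field_simp

theorem integral_exp_excessLoss_gaussianReal (m w η : ℝ) (v : ℝ≥0) :
    ∫ z, rexp (η * ((w - z) ^ 2 - (m - z) ^ 2)) ∂gaussianReal m v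
      = rexp ((η + 2 * η ^ 2 * v) * (w - m) ^ 2) := by
  have hsplit : ∀ z, rexp (η * ((w - z) ^ 2 - (m - z) ^ 2))
      = rexp (η * (w ^ 2 - m ^ 2)) * rexp (-2 * η * (w - m) * z) := by
    intro z
    rw [← exp_add]
    ring_nf
  have hmgf := congrFun (mgf_fun_id_gaussianReal (μ := m) (v := v)) (-2 * η * (w - m))
  rw [mgf] at hmgf
  simp_rw [hsplit]
  rw [integral_const_mul, hmgf, ← exp_add]
  ring_nf

/-- **Gaussian mean estimation, MGF of the excess loss:** if `W' ∼ N(m, σ²/n)` and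
`Z ∼ N(m, σ²)` are independent, then for every `η` with `4η²σ⁴ + 2ησ² < n`,
`E[exp(η r(W', Z))] = √(n / (n - 4η²σ⁴ - 2ησ²))`. -/
theorem gaussian_mean_estimation_mgf
    {Ω : Type*} [MeasurableSpace Ω] (P : Measure Ω) [IsProbabilityMeasure P]
    (m σ : ℝ) (n : ℕ) (hn : 1 ≤ n)
    (W' : Ω → ℝ)
    (hW'law : P.map W' = gaussianReal m ⟨σ ^ 2 / n, by positivity⟩)
    (Z : Ω → ℝ)
    (hZlaw : P.map Z = gaussianReal m ⟨σ ^ 2, sq_nonneg σ⟩)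
    (hindep : IndepFun W' Z P)
    (r : ℝ → ℝ → ℝ) (hr : r = fun w z => (w - z) ^ 2 - (m - z) ^ 2) :
    ∀ η : ℝ, 4 * η ^ 2 * σ ^ 4 + 2 * η * σ ^ 2 < n →
      ∫ ω, Real.exp (η * r (W' ω) (Z ω)) ∂P
        = Real.sqrt (n / (n - 4 * η ^ 2 * σ ^ 4 - 2 * η * σ ^ 2)) := by
  intro η hη
  subst hr
  have hn_pos : (0 : ℝ) < n := by exact_mod_cast hn
  set v₁ : ℝ≥0 := ⟨σ ^ 2 / n, by positivity⟩
  set v₂ : ℝ≥0 := ⟨σ ^ 2, sq_nonneg σ⟩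
  set c := η + 2 * η ^ 2 * σ ^ 2
  have hc : 2 * c * (σ ^ 2 / n) < 1 := by
    rw [show 2 * c * (σ ^ 2 / n) = (4 * η ^ 2 * σ ^ 4 + 2 * η * σ ^ 2) / n by field_simp; ring,
      div_lt_one hn_pos]
    exact hη
  have hW' : AEMeasurable W' P := aemeasurable_of_map_neZero (by rw [hW'law]; infer_instance)
  have hZ : AEMeasurable Z P := aemeasurable_of_map_neZero (by rw [hZlaw]; infer_instance)
  have hlaw : P.map (fun ω ↦ (W' ω, Z ω)) = (gaussianReal m v₁).prod (gaussianReal m v₂) := by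
    rw [← hW'law, ← hZlaw]
    exact (indepFun_iff_map_prod_eq_prod_map_map hW' hZ).1 hindep
  set f : ℝ × ℝ → ℝ := fun p ↦ rexp (η * ((p.1 - p.2) ^ 2 - (m - p.2) ^ 2))
  have hinner (w : ℝ) : ∫ z, f (w, z) ∂gaussianReal m v₂ = rexp (c * (w - m) ^ 2) :=
    integral_exp_excessLoss_gaussianReal m w η _
  have houter := integral_exp_mul_sq_sub_gaussianReal m v₁ hc
  calc ∫ ω, f (W' ω, Z ω) ∂P
      = ∫ w, ∫ z, f (w, z) ∂gaussianReal m v₂ ∂gaussianReal m v₁ := by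
        rw [← integral_map (hW'.prodMk hZ) (by fun_prop), hlaw]
        refine integral_prod_of_nonneg (fun p ↦ (exp_pos _).le) (by fun_prop)
          (.of_forall fun w ↦ .of_integral_ne_zero ?_) (.of_integral_ne_zero ?_)
        · rw [hinner]; positivity
        · simp_rw [hinner]; rw [houter]; positivity
    _ = (√(1 - 2 * c * (σ ^ 2 / n)))⁻¹ := by simp_rw [hinner]; exact houter
    _ = √(n / (n - 4 * η ^ 2 * σ ^ 4 - 2 * η * σ ^ 2)) := by
        rw [← sqrt_inv]
        congr 1
        field_simp
        ring
end

section
/- (Decoupling via Donsker–Varadhan.) Let P and Q be probability measures on measurable spaces 𝒳 and 𝒴, let Π be a probability measure on 𝒳 × 𝒴 whose marginals are P and Q, and let f : 𝒳 × 𝒴 → ℝ be measurable, integrable under both Π and P ⊗ Q, and σ-sub-Gaussian under P ⊗ Q. Then E_{P⊗Q}[f] − E_Π[f] ≤ √(2σ² · D_KL(Π ‖ P ⊗ Q)). -/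
/-!
Donsker–Varadhan: for every `g`, `E_Π[g] ≤ log E_{P⊗Q}[exp g] + D(Π ‖ P ⊗ Q)`, which is Gibbs'
inequality for `Π` against the tilted measure `exp g • (P ⊗ Q) / E_{P⊗Q}[exp g]`. Applied to
`g = -η (f - E_{P⊗Q}[f])` and combined with the sub-Gaussian bound on the log-moment generating
function, it gives `η Δ ≤ σ² η² / 2 + D` for every `η ∈ ℝ`, where `Δ = E_{P⊗Q}[f] - E_Π[f]`.
Taking `η = Δ / σ²` yields `Δ² ≤ 2 σ² D`.
-/

open MeasureTheory ProbabilityTheory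

/-- Real-valued Kullback–Leibler divergence `D(P‖Q) = ∫ log (dP/dQ) dP`. -/
noncomputable def klDivR {α : Type*} [MeasurableSpace α] (P Q : Measure α) : ℝ :=
  ∫ x, llr P Q x ∂P

open Real

lemma le_sqrt_of_forall_mul_le_sq_add {a c K : ℝ} (h : ∀ η : ℝ, η * a ≤ c * η ^ 2 / 2 + K) :
    a ≤ √(2 * c * K) := by
  rcases le_or_gt a 0 with ha | ha
  · exact ha.trans (sqrt_nonneg _)
  rcases le_or_gt c 0 with hc | hc
  · have h' := h ((K + 1) / a)
    rw [div_mul_cancel₀ _ ha.ne'] at h'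
    nlinarith [sq_nonneg ((K + 1) / a)]
  · obtain ⟨η, rfl⟩ : ∃ η, a = c * η := ⟨a / c, by field_simp⟩
    rw [le_sqrt' ha]
    nlinarith [h η]

section

variable {α : Type*} [MeasurableSpace α] {μ ν : Measure α}

lemma integral_llr_nonneg [IsProbabilityMeasure μ] [IsProbabilityMeasure ν] (hμν : μ ≪ ν)
    (h_int : Integrable (llr μ ν) μ) : 0 ≤ ∫ x, llr μ ν x ∂μ := by
  simpa using InformationTheory.integral_llr_add_sub_measure_univ_nonneg hμν h_int

/-- **Donsker–Varadhan inequality.** -/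
lemma integral_le_log_integral_exp_add_integral_llr [IsProbabilityMeasure μ]
    [SigmaFinite ν] [NeZero ν] (hμν : μ ≪ ν) (h_int : Integrable (llr μ ν) μ) {g : α → ℝ}
    (hgμ : Integrable g μ) (hgν : Integrable (fun x ↦ exp (g x)) ν) :
    ∫ x, g x ∂μ ≤ log (∫ x, exp (g x) ∂ν) + ∫ x, llr μ ν x ∂μ := by
  have := isProbabilityMeasure_tilted hgν
  have h_gibbs := integral_llr_nonneg (hμν.trans (absolutelyContinuous_tilted hgν))
    (integrable_llr_tilted_right hμν hgμ h_int hgν)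
  rw [integral_llr_tilted_right hμν hgμ hgν h_int] at h_gibbs
  linarith

lemma mul_integral_sub_integral_le_of_log_integral_exp_le [IsProbabilityMeasure μ]
    [IsProbabilityMeasure ν] (hμν : μ ≪ ν) (h_int : Integrable (llr μ ν) μ) {f : α → ℝ}
    (hfμ : Integrable f μ) {c : ℝ}
    (h_exp : ∀ η : ℝ, Integrable (fun x ↦ exp (η * (f x - ∫ y, f y ∂ν))) ν)
    (h_log : ∀ η : ℝ, log (∫ x, exp (η * (f x - ∫ y, f y ∂ν)) ∂ν) ≤ c * η ^ 2 / 2)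
    (η : ℝ) :
    η * ((∫ x, f x ∂ν) - ∫ x, f x ∂μ) ≤ c * η ^ 2 / 2 + ∫ x, llr μ ν x ∂μ := by
  set m := ∫ y, f y ∂ν
  have h_dv := integral_le_log_integral_exp_add_integral_llr (g := fun x ↦ -η * (f x - m))
    hμν h_int ((hfμ.sub (integrable_const m)).const_mul (-η)) (h_exp (-η))
  have h_lhs : ∫ x, -η * (f x - m) ∂μ = η * (m - ∫ x, f x ∂μ) := by
    rw [integral_const_mul, integral_sub hfμ (integrable_const m), integral_const, probReal_univ,
      one_smul]
    ring
  have h_cgf := h_log (-η)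
  rw [neg_sq] at h_cgf
  linarith

end

theorem donsker_varadhan_decoupling_general
    {𝒳 𝒴 : Type*} [MeasurableSpace 𝒳] [MeasurableSpace 𝒴]
    (P : Measure 𝒳) [IsProbabilityMeasure P]
    (Q : Measure 𝒴) [IsProbabilityMeasure Q]
    (J : Measure (𝒳 × 𝒴)) [IsProbabilityMeasure J]
    (f : 𝒳 × 𝒴 → ℝ)
    (hfJ : Integrable f J)
    (σ : ℝ)
    (hMGF : ∀ η : ℝ,
      Integrable (fun p => Real.exp (η * (f p - ∫ q, f q ∂(P.prod Q)))) (P.prod Q))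
    (hsubG : ∀ η : ℝ,
      Real.log (∫ p, Real.exp (η * (f p - ∫ q, f q ∂(P.prod Q))) ∂(P.prod Q))
        ≤ σ ^ 2 * η ^ 2 / 2)
    (hac : J ≪ P.prod Q)
    (hllr : Integrable (llr J (P.prod Q)) J) :
    (∫ p, f p ∂(P.prod Q)) - ∫ p, f p ∂J
      ≤ Real.sqrt (2 * σ ^ 2 * klDivR J (P.prod Q)) :=
  le_sqrt_of_forall_mul_le_sq_add
    (mul_integral_sub_integral_le_of_log_integral_exp_le hac hllr hfJ hMGF hsubG)

/-- **Decoupling via Donsker–Varadhan.** If `J` is a joint law on `𝒳 × 𝒴` with marginals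
`P` and `Q`, and `f` is `σ`-sub-Gaussian under `P ⊗ Q`, then
`E_{P⊗Q}[f] - E_J[f] ≤ √(2σ² D(J ‖ P ⊗ Q))`. -/
theorem donsker_varadhan_decoupling
    {𝒳 𝒴 : Type*} [MeasurableSpace 𝒳] [MeasurableSpace 𝒴]
    (P : Measure 𝒳) [IsProbabilityMeasure P]
    (Q : Measure 𝒴) [IsProbabilityMeasure Q]
    (J : Measure (𝒳 × 𝒴)) [IsProbabilityMeasure J]
    (hfst : J.map Prod.fst = P) (hsnd : J.map Prod.snd = Q)
    (f : 𝒳 × 𝒴 → ℝ) (hf : Measurable f)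
    (hfJ : Integrable f J) (hfPQ : Integrable f (P.prod Q))
    (σ : ℝ) (hσ : 0 ≤ σ)
    (hMGF : ∀ η : ℝ,
      Integrable (fun p => Real.exp (η * (f p - ∫ q, f q ∂(P.prod Q)))) (P.prod Q))
    (hsubG : ∀ η : ℝ,
      Real.log (∫ p, Real.exp (η * (f p - ∫ q, f q ∂(P.prod Q))) ∂(P.prod Q))
        ≤ σ ^ 2 * η ^ 2 / 2)
    (hac : J ≪ P.prod Q)
    (hllr : Integrable (llr J (P.prod Q)) J) :
    (∫ p, f p ∂(P.prod Q)) - ∫ p, f p ∂J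
      ≤ Real.sqrt (2 * σ ^ 2 * klDivR J (P.prod Q)) :=
  donsker_varadhan_decoupling_general P Q J f hfJ σ hMGF hsubG hac hllr
end
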